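/- arXiv:2509.25584 — 3 statements merged into one kernel-verified Lean document; each statement's English description precedes it below -/
import Mathlib

section
/- Let X_ℓ, X_{ℓ−1} be unit-norm random vectors in ℝ^d and Z a random variable such that h(x,y) = E[Z | X_ℓ = x, X_{ℓ−1} = y] is α-Lipschitz in its first argument and β-Lipschitz in its second argument (with respect to the Euclidean norm). If E[1 − ⟨X_ℓ, X_{ℓ−1}⟩] < ε/2, then E[(E[Z|X_ℓ] − E[Z|X_{ℓ−1}])²] < 2(α² + β²)ε. -/
/-!
Write `H = h(X, Y) = E[Z | X, Y]`. By the tower property `E[Z | X] = E[H | X]` and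
`E[Z | Y] = E[H | Y]`. Since the conditional mean minimises the mean squared error among
functions of `X`, `E[(E[H | X] - H)²] ≤ E[(h(X, X) - h(X, Y))²] ≤ β² E‖X - Y‖²`, and
`‖X - Y‖² = 2 (1 - ⟪X, Y⟫)` for unit vectors; symmetrically with `h(Y, Y)` and `α`.
Finally `(a - b)² ≤ 2 (a - H)² + 2 (b - H)²` with `a = E[H | X]`, `b = E[H | Y]`.
-/

open MeasureTheory ProbabilityTheory

/-- `ce X f` is the conditional expectation `E[f | X]`, i.e. the conditional expectation of
`f` with respect to the σ-algebra generated by `X`. -/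
noncomputable def ce {Ω γ F : Type*} [MeasureSpace Ω] [MeasurableSpace γ]
    [NormedAddCommGroup F] [NormedSpace ℝ F] [CompleteSpace F]
    (X : Ω → γ) (f : Ω → F) : Ω → F :=
  MeasureTheory.condExp (MeasurableSpace.comap X inferInstance) ℙ f

open scoped RealInnerProductSpace

section ConditionalExpectation

variable {Ω : Type*} {m m₀ : MeasurableSpace Ω} {μ : Measure Ω}

lemma integral_sq_sub_le {f g k : Ω → ℝ} (hf : MemLp f 2 μ) (hg : MemLp g 2 μ)
    (hk : MemLp k 2 μ) :
    ∫ ω, (f ω - g ω) ^ 2 ∂μ ≤ 2 * ∫ ω, (f ω - k ω) ^ 2 ∂μ + 2 * ∫ ω, (g ω - k ω) ^ 2 ∂μ := by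
  have hfk : Integrable (fun ω => 2 * (f ω - k ω) ^ 2) μ := (hf.sub hk).integrable_sq.const_mul 2
  have hgk : Integrable (fun ω => 2 * (g ω - k ω) ^ 2) μ := (hg.sub hk).integrable_sq.const_mul 2
  rw [← integral_const_mul, ← integral_const_mul, ← integral_add hfk hgk]
  refine integral_mono (hf.sub hg).integrable_sq (hfk.add hgk) fun ω => ?_
  calc (f ω - g ω) ^ 2 = (f ω - k ω + (k ω - g ω)) ^ 2 := by ring
    _ ≤ 2 * ((f ω - k ω) ^ 2 + (k ω - g ω) ^ 2) := add_sq_le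
    _ = 2 * (f ω - k ω) ^ 2 + 2 * (g ω - k ω) ^ 2 := by ring

variable [IsFiniteMeasure μ]

lemma integral_mul_condExp (hm : m ≤ m₀) {φ f : Ω → ℝ} (hφ : StronglyMeasurable[m] φ)
    (hφf : Integrable (φ * f) μ) (hf : Integrable f μ) :
    ∫ ω, φ ω * μ[f|m] ω ∂μ = ∫ ω, φ ω * f ω ∂μ :=
  calc ∫ ω, φ ω * μ[f|m] ω ∂μ = ∫ ω, μ[φ * f|m] ω ∂μ :=
        (integral_congr_ae (condExp_mul_of_stronglyMeasurable_left hφ hφf hf)).symm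
    _ = ∫ ω, φ ω * f ω ∂μ := integral_condExp hm

theorem integral_sq_condExp_sub_le (hm : m ≤ m₀) {f g : Ω → ℝ} (hf : MemLp f 2 μ)
    (hgm : StronglyMeasurable[m] g) (hg : MemLp g 2 μ) :
    ∫ ω, (μ[f|m] ω - f ω) ^ 2 ∂μ ≤ ∫ ω, (g ω - f ω) ^ 2 ∂μ := by
  set e := μ[f|m]
  have he : MemLp e 2 μ := hf.condExp one_le_two
  have hcross : ∫ ω, (g ω - e ω) * (e ω - f ω) ∂μ = 0 := by
    have horth := integral_mul_condExp hm (hgm.sub stronglyMeasurable_condExp)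
      ((hg.sub he).integrable_mul hf) (hf.integrable one_le_two)
    have hge : Integrable (fun ω => (g ω - e ω) * e ω) μ := (hg.sub he).integrable_mul he
    have hgf : Integrable (fun ω => (g ω - e ω) * f ω) μ := (hg.sub he).integrable_mul hf
    simp only [Pi.sub_apply] at horth
    simp only [mul_sub]
    rw [integral_sub hge hgf, horth, sub_self]
  have hpythagoras : ∫ ω, (g ω - f ω) ^ 2 ∂μ
      = ∫ ω, (g ω - e ω) ^ 2 ∂μ + ∫ ω, (e ω - f ω) ^ 2 ∂μ := by
    have hsplit : (fun ω => (g ω - f ω) ^ 2) = fun ω =>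
        ((g ω - e ω) ^ 2 + (e ω - f ω) ^ 2) + 2 * ((g ω - e ω) * (e ω - f ω)) := by
      funext ω; ring
    have hge : Integrable (fun ω => (g ω - e ω) ^ 2) μ := (hg.sub he).integrable_sq
    have hef : Integrable (fun ω => (e ω - f ω) ^ 2) μ := (he.sub hf).integrable_sq
    have hcross_int : Integrable (fun ω => 2 * ((g ω - e ω) * (e ω - f ω))) μ :=
      ((hg.sub he).integrable_mul (he.sub hf)).const_mul 2
    have hsum : Integrable (fun ω => (g ω - e ω) ^ 2 + (e ω - f ω) ^ 2) μ := hge.add hef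
    rw [hsplit, integral_add hsum hcross_int, integral_add hge hef, integral_const_mul,
      hcross, mul_zero, add_zero]
  have : 0 ≤ ∫ ω, (g ω - e ω) ^ 2 ∂μ := integral_nonneg fun ω => sq_nonneg _
  linarith

end ConditionalExpectation

section ConditionalExpectationGivenVariable

variable {Ω γ : Type*} [MeasureSpace Ω] [IsFiniteMeasure (ℙ : Measure Ω)] [MeasurableSpace γ]

lemma ce_comp_ae_eq_of_ae_eq_ce {δ : Type*} [MeasurableSpace δ] {W : Ω → γ} {f : γ → δ}
    (hW : Measurable W) (hf : Measurable f) {Z H : Ω → ℝ} (hH : H =ᵐ[ℙ] ce W Z) :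
    ce (f ∘ W) Z =ᵐ[ℙ] ce (f ∘ W) H :=
  ((condExp_congr_ae hH).trans
    (condExp_condExp_of_le (hf.comp (comap_measurable W)).comap_le hW.comap_le)).symm

lemma integral_sq_ce_sub_le {X : Ω → γ} (hX : Measurable X) {H : Ω → ℝ} (hH : MemLp H 2 ℙ)
    {φ : γ → ℝ} (hφ : Measurable φ) (hφX : MemLp (φ ∘ X) 2 ℙ) {c : ℝ} {D : Ω → ℝ}
    (hD : Integrable D ℙ) (hbound : ∀ᵐ ω ∂ℙ, (φ (X ω) - H ω) ^ 2 ≤ c * D ω) :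
    ∫ ω, (ce X H ω - H ω) ^ 2 ∂ℙ ≤ c * ∫ ω, D ω ∂ℙ :=
  calc ∫ ω, (ce X H ω - H ω) ^ 2 ∂ℙ ≤ ∫ ω, (φ (X ω) - H ω) ^ 2 ∂ℙ :=
        integral_sq_condExp_sub_le hX.comap_le hH
          (hφ.comp (comap_measurable X)).stronglyMeasurable hφX
    _ ≤ ∫ ω, c * D ω ∂ℙ := integral_mono_ae (hφX.sub hH).integrable_sq (hD.const_mul c) hbound
    _ = c * ∫ ω, D ω ∂ℙ := integral_const_mul c _

end ConditionalExpectationGivenVariable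

lemma sq_le_two_mul_sq_mul_one_sub_inner {E : Type*} [NormedAddCommGroup E]
    [InnerProductSpace ℝ E] {a c : ℝ} {x y : E} (hx : ‖x‖ = 1) (hy : ‖y‖ = 1)
    (ha : |a| ≤ c * ‖x - y‖) : a ^ 2 ≤ 2 * c ^ 2 * (1 - ⟪x, y⟫) :=
  calc a ^ 2 = |a| ^ 2 := (sq_abs a).symm
    _ ≤ (c * ‖x - y‖) ^ 2 := pow_le_pow_left₀ (abs_nonneg a) ha 2
    _ = 2 * c ^ 2 * (1 - ⟪x, y⟫) := by rw [mul_pow, norm_sub_sq_real, hx, hy]; ring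

lemma memLp_comp_prodMk_of_norm_eq_one {E : Type*} [NormedAddCommGroup E] [ProperSpace E]
    [MeasurableSpace E] [BorelSpace E] {Ω : Type*} [MeasurableSpace Ω] {μ : Measure Ω}
    [IsFiniteMeasure μ] {g : E × E → ℝ} (hg : Continuous g) {U V : Ω → E} (hU : Measurable U) (hV : Measurable V)
    (hU1 : ∀ᵐ ω ∂μ, ‖U ω‖ = 1) (hV1 : ∀ᵐ ω ∂μ, ‖V ω‖ = 1) (p : ENNReal) :
    MemLp (fun ω => g (U ω, V ω)) p μ := by
  obtain ⟨C, hC⟩ := ((isCompact_sphere (0 : E) 1).prod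
    (isCompact_sphere 0 1)).exists_bound_of_continuousOn hg.continuousOn
  refine MemLp.of_bound (hg.measurable.comp (hU.prodMk hV)).aestronglyMeasurable C ?_
  filter_upwards [hU1, hV1] with ω hUω hVω
  exact hC _ ⟨mem_sphere_zero_iff_norm.2 hUω, mem_sphere_zero_iff_norm.2 hVω⟩

lemma integral_sq_ce_sub_le_of_abs_le_mul_norm_sub {E : Type*} [NormedAddCommGroup E]
    [InnerProductSpace ℝ E] [ProperSpace E] [MeasurableSpace E] [BorelSpace E] {Ω : Type*}
    [MeasureSpace Ω] [IsFiniteMeasure (ℙ : Measure Ω)] {X Y : Ω → E} (hX : Measurable X)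
    (hY : Measurable Y) (hX1 : ∀ᵐ ω ∂ℙ, ‖X ω‖ = 1) (hY1 : ∀ᵐ ω ∂ℙ, ‖Y ω‖ = 1) {H : Ω → ℝ}
    (hH : MemLp H 2 ℙ) {φ : E → ℝ} (hφ : Continuous φ) {c : ℝ}
    (hbound : ∀ᵐ ω ∂ℙ, |φ (X ω) - H ω| ≤ c * ‖X ω - Y ω‖) :
    ∫ ω, (ce X H ω - H ω) ^ 2 ∂ℙ ≤ 2 * c ^ 2 * ∫ ω, 1 - ⟪X ω, Y ω⟫ ∂ℙ := by
  refine integral_sq_ce_sub_le hX hH hφ.measurable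
    (memLp_comp_prodMk_of_norm_eq_one (g := fun p => φ p.1) (by fun_prop) hX hX hX1 hX1 2)
    (memLp_one_iff_integrable.1 <| memLp_comp_prodMk_of_norm_eq_one
      (g := fun p => 1 - ⟪p.1, p.2⟫) (by fun_prop) hX hY hX1 hY1 1) ?_
  filter_upwards [hX1, hY1, hbound] with ω hx hy hω
  exact sq_le_two_mul_sq_mul_one_sub_inner hx hy hω

lemma continuous_uncurry_of_abs_sub_le {E F : Type*} [PseudoMetricSpace E] [PseudoMetricSpace F]
    {h : E → F → ℝ} {α β : ℝ} (hLip1 : ∀ x x' y, |h x y - h x' y| ≤ α * dist x x')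
    (hLip2 : ∀ x y y', |h x y - h x y'| ≤ β * dist y y') : Continuous (Function.uncurry h) :=
  continuous_prod_of_continuous_lipschitzWith _ α.toNNReal
    (fun x => (LipschitzWith.of_dist_le' fun y y' => hLip2 x y y').continuous)
    fun y => LipschitzWith.of_dist_le' fun x x' => hLip1 x x' y

theorem stmt_6_general {Ω : Type*} [MeasureSpace Ω] [IsProbabilityMeasure (ℙ : Measure Ω)]
    {d : ℕ} (X Y : Ω → EuclideanSpace ℝ (Fin d))
    (hXm : Measurable X) (hYm : Measurable Y)
    (hX1 : ∀ᵐ ω ∂ℙ, ‖X ω‖ = 1) (hY1 : ∀ᵐ ω ∂ℙ, ‖Y ω‖ = 1)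
    (Z : Ω → ℝ)
    (h : EuclideanSpace ℝ (Fin d) → EuclideanSpace ℝ (Fin d) → ℝ)
    (α β ε : ℝ) (hα : 0 < α)
    (hLip1 : ∀ x x' y, |h x y - h x' y| ≤ α * ‖x - x'‖)
    (hLip2 : ∀ x y y', |h x y - h x y'| ≤ β * ‖y - y'‖)
    (hcond : (fun ω => h (X ω) (Y ω)) =ᵐ[ℙ] ce (fun ω => (X ω, Y ω)) Z)
    (hcos : ∫ ω, (1 - (inner ℝ (X ω) (Y ω) : ℝ)) ∂ℙ < ε / 2) :
    ∫ ω, (ce X Z ω - ce Y Z ω) ^ 2 ∂ℙ < 2 * (α ^ 2 + β ^ 2) * ε := by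
  have hh : Continuous (Function.uncurry h) := continuous_uncurry_of_abs_sub_le
    (by simpa only [dist_eq_norm] using hLip1) (by simpa only [dist_eq_norm] using hLip2)
  have hdiag : Continuous fun x => h x x := hh.comp (continuous_id.prodMk continuous_id)
  set H := fun ω => h (X ω) (Y ω)
  have hH : MemLp H 2 ℙ := memLp_comp_prodMk_of_norm_eq_one hh hXm hYm hX1 hY1 2
  have hXerr := integral_sq_ce_sub_le_of_abs_le_mul_norm_sub hXm hYm hX1 hY1 hH hdiag
    (.of_forall fun ω => hLip2 (X ω) (X ω) (Y ω))
  have hYerr := integral_sq_ce_sub_le_of_abs_le_mul_norm_sub hYm hXm hY1 hX1 hH hdiag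
    (.of_forall fun ω => hLip1 (Y ω) (X ω) (Y ω))
  simp only [real_inner_comm (X _)] at hYerr
  have hXY : Measurable fun ω => (X ω, Y ω) := hXm.prodMk hYm
  have htower : ∀ᵐ ω ∂ℙ, ce X Z ω - ce Y Z ω = ce X H ω - ce Y H ω := by
    filter_upwards [ce_comp_ae_eq_of_ae_eq_ce (f := Prod.fst) hXY measurable_fst hcond,
      ce_comp_ae_eq_of_ae_eq_ce (f := Prod.snd) hXY measurable_snd hcond] with ω hx hy
    exact congrArg₂ _ hx hy
  calc ∫ ω, (ce X Z ω - ce Y Z ω) ^ 2 ∂ℙ = ∫ ω, (ce X H ω - ce Y H ω) ^ 2 ∂ℙ :=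
        integral_congr_ae (htower.mono fun ω hω => congrArg (· ^ 2) hω)
    _ ≤ 2 * ∫ ω, (ce X H ω - H ω) ^ 2 ∂ℙ + 2 * ∫ ω, (ce Y H ω - H ω) ^ 2 ∂ℙ :=
        integral_sq_sub_le (hH.condExp one_le_two) (hH.condExp one_le_two) hH
    _ ≤ 4 * (α ^ 2 + β ^ 2) * ∫ ω, 1 - ⟪X ω, Y ω⟫ ∂ℙ := by linarith
    _ < 4 * (α ^ 2 + β ^ 2) * (ε / 2) := by gcongr
    _ = 2 * (α ^ 2 + β ^ 2) * ε := by ring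

/-- Functional redundancy from geometric redundancy (Theorem 1). -/
theorem stmt_6 {Ω : Type*} [MeasureSpace Ω] [IsProbabilityMeasure (ℙ : Measure Ω)]
    {d : ℕ} (X Y : Ω → EuclideanSpace ℝ (Fin d))
    (hXm : Measurable X) (hYm : Measurable Y)
    (hX1 : ∀ᵐ ω ∂ℙ, ‖X ω‖ = 1) (hY1 : ∀ᵐ ω ∂ℙ, ‖Y ω‖ = 1)
    (Z : Ω → ℝ) (hZ : MemLp Z 2 ℙ)
    (h : EuclideanSpace ℝ (Fin d) → EuclideanSpace ℝ (Fin d) → ℝ)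
    (α β ε : ℝ) (hα : 0 < α) (hβ : 0 < β) (hε : 0 < ε)
    (hLip1 : ∀ x x' y, |h x y - h x' y| ≤ α * ‖x - x'‖)
    (hLip2 : ∀ x y y', |h x y - h x y'| ≤ β * ‖y - y'‖)
    (hcond : (fun ω => h (X ω) (Y ω)) =ᵐ[ℙ] ce (fun ω => (X ω, Y ω)) Z)
    (hcos : ∫ ω, (1 - (inner ℝ (X ω) (Y ω) : ℝ)) ∂ℙ < ε / 2) :
    ∫ ω, (ce X Z ω - ce Y Z ω) ^ 2 ∂ℙ < 2 * (α ^ 2 + β ^ 2) * ε :=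
  stmt_6_general X Y hXm hYm hX1 hY1 Z h α β ε hα hLip1 hLip2 hcond hcos
end

section
/- Let X_{ℓ−1}, X_ℓ be discrete random variables and Z ∈ ℝ^d a random vector with ‖Z‖₂ ≤ B almost surely, such that X_{ℓ−1} — X_ℓ — Z is a Markov chain. Then E[‖E[Z|X_ℓ] − E[Z|X_{ℓ−1}]‖₂²] ≤ 2B² · H(X_ℓ | X_{ℓ−1}). -/
open MeasureTheory ProbabilityTheory

theorem two_mul_one_sub_sq_le_log_inv {q : ℝ} (hq0 : 0 < q) (hq1 : q ≤ 1) :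
    2 * (1 - q) ^ 2 ≤ Real.log q⁻¹ := by
  let f : ℝ → ℝ := fun x => Real.log x + 2 * (1 - x) ^ 2
  have hderiv : ∀ x, 0 < x → HasDerivAt f (x⁻¹ - 4 * (1 - x)) x := fun x hx =>
    ((Real.hasDerivAt_log hx.ne').add
      ((((hasDerivAt_id' x).const_sub 1).pow 2).const_mul 2)).congr_deriv (by ring)
  have hmono : MonotoneOn f (Set.Ioc 0 1) := by
    refine monotoneOn_of_deriv_nonneg (convex_Ioc 0 1)
      (fun x hx => (hderiv x hx.1).continuousAt.continuousWithinAt)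
      (fun x hx => (hderiv x (interior_subset hx).1).differentiableAt.differentiableWithinAt)
      fun x hx => ?_
    rw [interior_Ioc] at hx
    have hsq : x⁻¹ - 4 * (1 - x) = (2 * x - 1) ^ 2 / x := by field_simp [hx.1.ne']; ring
    rw [(hderiv x hx.1).deriv, hsq]
    exact div_nonneg (sq_nonneg _) hx.1.le
  have hf1 := hmono ⟨hq0, hq1⟩ ⟨one_pos, le_rfl⟩ hq1
  simp only [f, Real.log_one, sub_self] at hf1
  rw [Real.log_inv]
  nlinarith

section ConvexCombination

variable {ι E : Type*} [Fintype ι] [SeminormedAddCommGroup E] [NormedSpace ℝ E]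
  {r : ι → ℝ} {v : ι → E} {B : ℝ}

theorem norm_sub_sum_smul_le (hr0 : ∀ i, 0 ≤ r i) (hr1 : ∑ i, r i = 1)
    (hv : ∀ i, ‖v i‖ ≤ B) (j : ι) : ‖v j - ∑ i, r i • v i‖ ≤ 2 * B * (1 - r j) := by
  classical
  have hvj : v j - ∑ i, r i • v i = ∑ i ∈ Finset.univ.erase j, r i • (v j - v i) := by
    rw [Finset.sum_erase _ (by simp)]
    simp only [smul_sub, Finset.sum_sub_distrib, ← Finset.sum_smul, hr1, one_smul]
  calc ‖v j - ∑ i, r i • v i‖ ≤ ∑ i ∈ Finset.univ.erase j, r i * (2 * B) := by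
        rw [hvj]
        refine (norm_sum_le _ _).trans (Finset.sum_le_sum fun i _ => ?_)
        rw [norm_smul, Real.norm_of_nonneg (hr0 i)]
        gcongr
        · exact hr0 i
        · exact (norm_sub_le _ _).trans (by linarith [hv i, hv j])
    _ = 2 * B * (1 - r j) := by
        rw [← Finset.sum_mul, Finset.sum_erase_eq_sub (Finset.mem_univ j), hr1, mul_comm]

theorem sq_norm_sub_sum_smul_le_mul_log_inv (hr0 : ∀ i, 0 ≤ r i) (hr1 : ∑ i, r i = 1)
    (hv : ∀ i, ‖v i‖ ≤ B) {j : ι} (hj : 0 < r j) :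
    ‖v j - ∑ i, r i • v i‖ ^ 2 ≤ 2 * B ^ 2 * Real.log (r j)⁻¹ := by
  have hrj : r j ≤ 1 := hr1 ▸ Finset.single_le_sum (fun i _ => hr0 i) (Finset.mem_univ j)
  have hB : 0 ≤ B := (norm_nonneg _).trans (hv j)
  calc ‖v j - ∑ i, r i • v i‖ ^ 2 ≤ (2 * B * (1 - r j)) ^ 2 := by
        gcongr
        exact norm_sub_sum_smul_le hr0 hr1 hv j
    _ = 2 * B ^ 2 * (2 * (1 - r j) ^ 2) := by ring
    _ ≤ 2 * B ^ 2 * Real.log (r j)⁻¹ := by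
        gcongr
        exact two_mul_one_sub_sq_le_log_inv hj hrj

end ConvexCombination

section Conditioning

variable {Ω E : Type*} {mΩ : MeasurableSpace Ω} {μ : Measure Ω} [NormedAddCommGroup E]

theorem MeasureTheory.Integrable.cond {f : Ω → E} (hf : Integrable f μ) (s : Set Ω) :
    Integrable f μ[|s] := by
  rcases eq_or_ne (μ s) 0 with hs | hs
  · simp [cond_eq_zero_of_meas_eq_zero hs]
  · exact hf.restrict.smul_measure (ENNReal.inv_ne_top.2 hs)

variable [NormedSpace ℝ E]

theorem norm_integral_cond_le {f : Ω → E} {B : ℝ} (hf : ∀ᵐ ω ∂μ, ‖f ω‖ ≤ B) (hB : 0 ≤ B)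
    (s : Set Ω) : ‖∫ ω, f ω ∂μ[|s]‖ ≤ B :=
  (norm_integral_le_of_norm_le_const (cond_absolutelyContinuous.ae_le hf)).trans
    (mul_le_of_le_one_right hB measureReal_le_one)

theorem measureReal_smul_integral_cond [IsFiniteMeasure μ] (s : Set Ω) (f : Ω → E) :
    μ.real s • ∫ ω, f ω ∂μ[|s] = ∫ ω in s, f ω ∂μ := by
  rcases eq_or_ne (μ s) 0 with hs | hs
  · simp [Measure.restrict_eq_zero.2 hs, measureReal_def, hs]
  · rw [ProbabilityTheory.cond, integral_smul_measure, smul_smul, ENNReal.toReal_inv,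
      measureReal_def, mul_inv_cancel₀ (ENNReal.toReal_ne_zero.2 ⟨hs, measure_ne_top μ s⟩),
      one_smul]

variable {γ : Type*} [Fintype γ] [MeasurableSpace γ] [MeasurableSingletonClass γ] {X : Ω → γ}

theorem setIntegral_preimage_eq_sum (hX : Measurable X) {f : Ω → E} (hf : Integrable f μ)
    (u : Set γ) [DecidablePred (· ∈ u)] :
    ∫ ω in X ⁻¹' u, f ω ∂μ = ∑ c with c ∈ u, ∫ ω in X ⁻¹' {c}, f ω ∂μ := by
  rw [← integral_biUnion_finset _ (fun c _ => hX (measurableSet_singleton c))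
    ((pairwise_disjoint_fiber X).set_pairwise _) fun c _ => hf.integrableOn]
  congr
  ext
  simp

variable [IsFiniteMeasure μ]

theorem integral_cond_eq_sum_integral_cond_inter (hX : Measurable X) {s : Set Ω}
    (hs : MeasurableSet s) {f : Ω → E} (hf : Integrable f μ) :
    ∫ ω, f ω ∂μ[|s] = ∑ c, μ[|s].real (X ⁻¹' {c}) • ∫ ω, f ω ∂μ[|s ∩ X ⁻¹' {c}] := by
  conv_lhs => rw [← sum_meas_smul_cond_fiber hX μ[|s]]
  rw [integral_finsetSum_measure fun c _ =>
    ((hf.cond s).cond _).smul_measure (measure_ne_top _ _)]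
  simp only [integral_smul_measure, cond_cond_eq_cond_inter hs (hX (measurableSet_singleton _))]
  rfl

variable [CompleteSpace E]

theorem integral_comp_eq_sum (hX : Measurable X) (g : γ → E) :
    ∫ ω, g (X ω) ∂μ = ∑ c, μ.real (X ⁻¹' {c}) • g c := by
  rw [← integral_map hX.aemeasurable .of_discrete, integral_fintype .of_finite]
  simp only [map_measureReal_apply hX (measurableSet_singleton _)]

theorem condExp_comap_ae_eq_integral_cond (hX : Measurable X) {f : Ω → E}
    (hf : Integrable f μ) :
    μ[f | MeasurableSpace.comap X inferInstance] =ᵐ[μ] fun ω => ∫ y, f y ∂μ[|X ⁻¹' {X ω}] := by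
  classical
  set g : γ → E := fun c => ∫ y, f y ∂μ[|X ⁻¹' {c}]
  have hg : Integrable (fun ω => g (X ω)) μ := (Integrable.of_finite (f := g)).comp_measurable hX
  refine (ae_eq_condExp_of_forall_setIntegral_eq hX.comap_le hf (fun _ _ _ => hg.integrableOn)
    ?_ ((StronglyMeasurable.of_discrete (f := g)).comp_measurable
      (comap_measurable X)).aestronglyMeasurable).symm
  rintro _ ⟨u, -, rfl⟩ -
  rw [setIntegral_preimage_eq_sum hX hf, setIntegral_preimage_eq_sum hX hg]
  refine Finset.sum_congr rfl fun c _ => ?_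
  rw [setIntegral_congr_fun (hX (measurableSet_singleton c)) (g := fun _ => g c)
    fun ω hω => congrArg g hω, setIntegral_const, measureReal_smul_integral_cond]

end Conditioning

section Markov

variable {Ω : Type*} {mΩ : MeasurableSpace Ω} {μ : Measure Ω} [IsFiniteMeasure μ]

/-- `Z` is independent of the event `t` conditionally on the event `s`. -/
def CondIndepEvent {F : Type*} [MeasurableSpace F] (μ : Measure Ω) (Z : Ω → F) (s t : Set Ω) :
    Prop :=
  ∀ A, MeasurableSet A → μ (Z ⁻¹' A ∩ s ∩ t) * μ s = μ (Z ⁻¹' A ∩ s) * μ (s ∩ t)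

theorem map_cond_inter_eq_map_cond {F : Type*} [MeasurableSpace F] {s t : Set Ω}
    (hs : MeasurableSet s) (ht : MeasurableSet t) {Z : Ω → F} (hZ : Measurable Z)
    (hZst : CondIndepEvent μ Z s t) (hst : μ (s ∩ t) ≠ 0) : μ[|s ∩ t].map Z = μ[|s].map Z := by
  have hs0 : μ s ≠ 0 := fun h => hst (measure_mono_null Set.inter_subset_left h)
  ext A hA
  rw [Measure.map_apply hZ hA, Measure.map_apply hZ hA, cond_apply (hs.inter ht),
    cond_apply hs, ← ENNReal.div_eq_inv_mul, ← ENNReal.div_eq_inv_mul,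
    ENNReal.div_eq_div_iff hs0 (measure_ne_top _ _) hst (measure_ne_top _ _),
    Set.inter_comm s (Z ⁻¹' A), Set.inter_comm _ (Z ⁻¹' A), ← Set.inter_assoc, mul_comm,
    hZst A hA, mul_comm]

variable {α β E : Type*} [MeasurableSpace α] [MeasurableSingletonClass α]
  [Fintype β] [MeasurableSpace β] [MeasurableSingletonClass β]
  [NormedAddCommGroup E] [NormedSpace ℝ E] [MeasurableSpace E] [BorelSpace E]
  {X : Ω → α} {Y : Ω → β} {Z : Ω → E}

theorem integral_cond_eq_sum_of_markov (hX : Measurable X) (hY : Measurable Y)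
    (hZm : Measurable Z) (hZ : Integrable Z μ) (a : α)
    (hMarkov : ∀ b, CondIndepEvent μ Z (Y ⁻¹' {b}) (X ⁻¹' {a})) :
    ∫ ω, Z ω ∂μ[|X ⁻¹' {a}] = ∑ b, μ[|X ⁻¹' {a}].real (Y ⁻¹' {b}) • ∫ ω, Z ω ∂μ[|Y ⁻¹' {b}] := by
  have hXa := hX (measurableSet_singleton a)
  rw [integral_cond_eq_sum_integral_cond_inter hY hXa hZ]
  refine Finset.sum_congr rfl fun b _ => ?_
  have hYb := hY (measurableSet_singleton b)
  rcases eq_or_ne (μ (Y ⁻¹' {b} ∩ X ⁻¹' {a})) 0 with h0 | h0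
  · rw [Set.inter_comm] at h0
    simp [measureReal_def, cond_apply hXa, h0]
  congr 1
  calc ∫ ω, Z ω ∂μ[|X ⁻¹' {a} ∩ Y ⁻¹' {b}] = ∫ z, z ∂(μ[|Y ⁻¹' {b} ∩ X ⁻¹' {a}].map Z) := by
        rw [Set.inter_comm]
        exact (integral_map hZm.aemeasurable
          (hZ.cond _).aestronglyMeasurable.aestronglyMeasurable_id_map).symm
    _ = ∫ z, z ∂(μ[|Y ⁻¹' {b}].map Z) := by
        rw [map_cond_inter_eq_map_cond hYb hXa hZm (hMarkov b) h0]
    _ = ∫ ω, Z ω ∂μ[|Y ⁻¹' {b}] :=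
        integral_map hZm.aemeasurable
          (hZ.cond _).aestronglyMeasurable.aestronglyMeasurable_id_map

theorem measureReal_mul_sq_norm_integral_cond_sub_le (hX : Measurable X) (hY : Measurable Y)
    (hZm : Measurable Z) (hZ : Integrable Z μ) {B : ℝ} (hB : ∀ᵐ ω ∂μ, ‖Z ω‖ ≤ B) (hB0 : 0 ≤ B)
    (a : α)
    (hMarkov : ∀ b, CondIndepEvent μ Z (Y ⁻¹' {b}) (X ⁻¹' {a})) (b : β) :
    μ.real (X ⁻¹' {a} ∩ Y ⁻¹' {b}) * ‖∫ ω, Z ω ∂μ[|Y ⁻¹' {b}] - ∫ ω, Z ω ∂μ[|X ⁻¹' {a}]‖ ^ 2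
      ≤ 2 * B ^ 2 * (μ.real (X ⁻¹' {a} ∩ Y ⁻¹' {b}) *
          Real.log (μ.real (X ⁻¹' {a}) / μ.real (X ⁻¹' {a} ∩ Y ⁻¹' {b}))) := by
  have hXa := hX (measurableSet_singleton a)
  rcases eq_or_ne (μ (X ⁻¹' {a} ∩ Y ⁻¹' {b})) 0 with h0 | h0
  · simp [measureReal_def, h0]
  have ha : μ (X ⁻¹' {a}) ≠ 0 := fun h => h0 (measure_mono_null Set.inter_subset_left h)
  have := cond_isProbabilityMeasure (s := X ⁻¹' {a}) ha
  set r : β → ℝ := fun b' => μ[|X ⁻¹' {a}].real (Y ⁻¹' {b'})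
  have hrb : r b = μ.real (X ⁻¹' {a} ∩ Y ⁻¹' {b}) / μ.real (X ⁻¹' {a}) := by
    simp [r, measureReal_def, cond_apply hXa, ENNReal.toReal_mul, div_eq_inv_mul]
  have hr1 : ∑ b', r b' = 1 := by
    simp only [r]
    rw [sum_measureReal_preimage_singleton _ (fun b' _ => hY (measurableSet_singleton b'))
      fun _ _ => measure_ne_top _ _]
    simp
  have hrb0 : 0 < r b := by
    rw [hrb]
    exact div_pos (ENNReal.toReal_pos h0 (measure_ne_top _ _))
      (ENNReal.toReal_pos ha (measure_ne_top _ _))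
  rw [integral_cond_eq_sum_of_markov hX hY hZm hZ a hMarkov]
  calc _ ≤ μ.real (X ⁻¹' {a} ∩ Y ⁻¹' {b}) * (2 * B ^ 2 * Real.log (r b)⁻¹) := by
        gcongr
        exact sq_norm_sub_sum_smul_le_mul_log_inv (v := fun b' => ∫ ω, Z ω ∂μ[|Y ⁻¹' {b'}])
          (fun _ => measureReal_nonneg) hr1
          (fun b' => norm_integral_cond_le hB hB0 _) hrb0
    _ = _ := by rw [hrb, inv_div]; ring

end Markov

/-- Theorem 5: `Xprev = X_{ℓ-1}` and `Xcur = X_ℓ` are discrete (finitely supported) random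
variables, `Z` is an `ℝᵈ`-valued random vector with `‖Z‖ ≤ B` a.s., and
`X_{ℓ-1} — X_ℓ — Z` is a Markov chain (`Z` is conditionally independent of `X_{ℓ-1}` given
`X_ℓ`, stated multiplicatively). Then
`E[‖E[Z|X_ℓ] − E[Z|X_{ℓ-1}]‖²] ≤ 2B²·H(X_ℓ | X_{ℓ-1})`, with the conditional Shannon entropy
(in nats) written out as a finite sum. -/
theorem stmt_8 {Ω S T : Type*} [MeasureSpace Ω] [IsProbabilityMeasure (ℙ : Measure Ω)]
    [Fintype S] [MeasurableSpace S] [MeasurableSingletonClass S]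
    [Fintype T] [MeasurableSpace T] [MeasurableSingletonClass T]
    {d : ℕ} (Xprev : Ω → S) (Xcur : Ω → T)
    (hXp : Measurable Xprev) (hXc : Measurable Xcur)
    (Z : Ω → EuclideanSpace ℝ (Fin d)) (hZm : Measurable Z)
    (B : ℝ) (hB : ∀ᵐ ω ∂ℙ, ‖Z ω‖ ≤ B)
    (hMarkov : ∀ (A : Set (EuclideanSpace ℝ (Fin d))), MeasurableSet A → ∀ (a : S) (b : T),
      ℙ (Z ⁻¹' A ∩ Xcur ⁻¹' {b} ∩ Xprev ⁻¹' {a}) * ℙ (Xcur ⁻¹' {b})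
        = ℙ (Z ⁻¹' A ∩ Xcur ⁻¹' {b}) * ℙ (Xcur ⁻¹' {b} ∩ Xprev ⁻¹' {a})) :
    ∫ ω, ‖ce Xcur Z ω - ce Xprev Z ω‖ ^ 2 ∂ℙ
      ≤ 2 * B ^ 2 * ∑ a : S, ∑ b : T,
          (ℙ (Xprev ⁻¹' {a} ∩ Xcur ⁻¹' {b})).toReal *
            Real.log ((ℙ (Xprev ⁻¹' {a})).toReal
              / (ℙ (Xprev ⁻¹' {a} ∩ Xcur ⁻¹' {b})).toReal) := by
  have hB0 : 0 ≤ B := hB.exists.elim fun _ h => (norm_nonneg _).trans h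
  have hZ : Integrable Z ℙ := .mono' (integrable_const B) hZm.aestronglyMeasurable hB
  have hce : (fun ω => ‖ce Xcur Z ω - ce Xprev Z ω‖ ^ 2) =ᵐ[ℙ] fun ω =>
      ‖∫ y, Z y ∂ℙ[|Xcur ⁻¹' {Xcur ω}] - ∫ y, Z y ∂ℙ[|Xprev ⁻¹' {Xprev ω}]‖ ^ 2 := by
    filter_upwards [condExp_comap_ae_eq_integral_cond hXc hZ,
      condExp_comap_ae_eq_integral_cond hXp hZ] with ω hc hp
    rw [ce, ce, hc, hp]
  rw [integral_congr_ae hce, integral_comp_eq_sum (hXp.prodMk hXc)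
    (fun p => ‖∫ y, Z y ∂ℙ[|Xcur ⁻¹' {p.2}] - ∫ y, Z y ∂ℙ[|Xprev ⁻¹' {p.1}]‖ ^ 2),
    Fintype.sum_prod_type, Finset.mul_sum]
  gcongr with a _
  rw [Finset.mul_sum]
  gcongr with b _
  rw [smul_eq_mul, ← Set.singleton_prod_singleton, Set.mk_preimage_prod]
  exact measureReal_mul_sq_norm_integral_cond_sub_le hXp hXc hZm hZ hB hB0 a
    (fun b A hA => hMarkov A hA a b) b
end

section
/- Let X, Y be random variables with shared finite support 𝒳, ρ symmetric on 𝒳×𝒳, B̄(t,x) = {x' ∈ 𝒳 : ρ(x,x') ≤ t}, P_t = P[ρ(X,Y) > t], p_min = inf_x P[Y ∈ B̄(t,x)], and p_max = sup_x P[Y ∈ B̄(t,x)], with 0 ≤ p_min < 1, 0 < p_max ≤ 1, and p_min + p_max < 1. Then the mutual information satisfies I(X; Y) ≥ (1 − P_t)·log(1/p_max) − P_t·log(1 − p_min) − H₂(P_t). -/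
/-!
Mutual information is the divergence of the joint law of `(X, Y)` from the product of its
marginals, and by the log-sum inequality it can only decrease when both laws are coarse-grained to
the two events `ρ(X, Y) > t` and `ρ(X, Y) ≤ t`. Under the product law the second event has
probability `∑ₓ P[X = x] P[Y ∈ B̄(t, x)] ∈ [p_min, p_max]`, so the binary divergence that remains
is at least the one obtained by replacing the product masses of the two events by their upper
bounds `1 - p_min` and `p_max`.
-/

open Real Finset

lemma mul_log_div_of_ne_zero (x : ℝ) {y : ℝ} (hy : y ≠ 0) :
    x * log (x / y) = x * log x - x * log y := by
  rcases eq_or_ne x 0 with rfl | hx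
  · simp
  · rw [log_div hx hy, mul_sub]

/-- The tangent-line bound `log x ≥ 1 - 1/x` at `x = f / (c g)`, scaled by `f`. -/
lemma mul_log_add_sub_le_mul_log_div {f g c : ℝ} (hf : 0 ≤ f) (hg : 0 ≤ g)
    (hfg : g = 0 → f = 0) (hc : 0 < c) :
    f * log c + f - c * g ≤ f * log (f / g) := by
  rcases hf.eq_or_lt with rfl | hf
  · simp only [zero_mul, zero_add, zero_sub, neg_nonpos]
    positivity
  have hg : 0 < g := hg.lt_of_ne fun h => hf.ne' (hfg h.symm)
  have key := one_sub_inv_le_log_of_pos (show 0 < f / (c * g) by positivity)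
  rw [inv_div, log_div hf.ne' (by positivity), log_mul hc.ne' hg.ne'] at key
  rw [log_div hf.ne' hg.ne']
  have := mul_le_mul_of_nonneg_left key hf.le
  rw [mul_sub, mul_one, mul_div_cancel₀ _ hf.ne'] at this
  linarith

/-- The log-sum inequality, with the total mass of `g` relaxed to an upper bound `G`. -/
lemma mul_log_div_le_sum_mul_log_div {ι : Type*} {s : Finset ι} {f g : ι → ℝ} {G : ℝ}
    (hf : ∀ i ∈ s, 0 ≤ f i) (hg : ∀ i ∈ s, 0 ≤ g i) (hfg : ∀ i ∈ s, g i = 0 → f i = 0)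
    (hG : 0 < G) (hgG : ∑ i ∈ s, g i ≤ G) :
    (∑ i ∈ s, f i) * log ((∑ i ∈ s, f i) / G) ≤ ∑ i ∈ s, f i * log (f i / g i) := by
  set F := ∑ i ∈ s, f i
  rcases (sum_nonneg hf).eq_or_lt with hF | hF
  · have hf0 := (sum_eq_zero_iff_of_nonneg hf).mp hF.symm
    rw [show F = 0 from hF.symm, zero_mul]
    exact (sum_eq_zero fun i hi => by rw [hf0 i hi, zero_mul]).ge
  set c := F / G
  have hc : 0 < c := by positivity
  calc F * log c = F * log c + F - c * G := by
        rw [div_mul_cancel₀ _ hG.ne']; ring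
    _ ≤ F * log c + F - c * ∑ i ∈ s, g i := by gcongr
    _ = ∑ i ∈ s, (f i * log c + f i - c * g i) := by
        rw [sum_sub_distrib, sum_add_distrib, mul_sum, sum_mul]
    _ ≤ ∑ i ∈ s, f i * log (f i / g i) :=
        sum_le_sum fun i hi => mul_log_add_sub_le_mul_log_div (hf i hi) (hg i hi) (hfg i hi) hc

lemma sum_mul_le_sup'_of_sum_eq_one {ι : Type*} {s : Finset ι} (hs : s.Nonempty)
    {w f : ι → ℝ} (hw0 : ∀ i ∈ s, 0 ≤ w i) (hw1 : ∑ i ∈ s, w i = 1) :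
    ∑ i ∈ s, w i * f i ≤ s.sup' hs f :=
  calc ∑ i ∈ s, w i * f i ≤ ∑ i ∈ s, w i * s.sup' hs f :=
        sum_le_sum fun i hi => mul_le_mul_of_nonneg_left (le_sup' f hi) (hw0 i hi)
    _ = s.sup' hs f := by rw [← sum_mul, hw1, one_mul]

lemma inf'_le_sum_mul_of_sum_eq_one {ι : Type*} {s : Finset ι} (hs : s.Nonempty)
    {w f : ι → ℝ} (hw0 : ∀ i ∈ s, 0 ≤ w i) (hw1 : ∑ i ∈ s, w i = 1) :
    s.inf' hs f ≤ ∑ i ∈ s, w i * f i :=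
  calc s.inf' hs f = ∑ i ∈ s, w i * s.inf' hs f := by rw [← sum_mul, hw1, one_mul]
    _ ≤ ∑ i ∈ s, w i * f i :=
        sum_le_sum fun i hi => mul_le_mul_of_nonneg_left (inf'_le f hi) (hw0 i hi)

section JointDistribution

variable {α β : Type*} [Fintype α] [Fintype β] {p : α → β → ℝ}

def marginalProd (p : α → β → ℝ) (ab : α × β) : ℝ :=
  (∑ b, p ab.1 b) * (∑ a, p a ab.2)

lemma marginalProd_nonneg (hp0 : ∀ a b, 0 ≤ p a b) (ab : α × β) : 0 ≤ marginalProd p ab :=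
  mul_nonneg (sum_nonneg fun b _ => hp0 _ b) (sum_nonneg fun a _ => hp0 a _)

lemma eq_zero_of_marginalProd_eq_zero (hp0 : ∀ a b, 0 ≤ p a b) {ab : α × β}
    (h : marginalProd p ab = 0) : p ab.1 ab.2 = 0 := by
  rcases mul_eq_zero.mp h with h | h
  · exact (sum_eq_zero_iff_of_nonneg fun b _ => hp0 _ b).mp h _ (mem_univ _)
  · exact (sum_eq_zero_iff_of_nonneg fun a _ => hp0 a _).mp h _ (mem_univ _)

lemma sum_marginalProd (hp1 : ∑ a, ∑ b, p a b = 1) : ∑ ab, marginalProd p ab = 1 := by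
  rw [Fintype.sum_prod_type]
  simp only [marginalProd]
  rw [← Fintype.sum_mul_sum, hp1, sum_comm, hp1, one_mul]

/-- Data processing for the two-cell partition `{S, Sᶜ}`. -/
lemma mul_log_div_add_mul_log_div_le_mutualInfo [DecidableEq (α × β)]
    (hp0 : ∀ a b, 0 ≤ p a b) (hp1 : ∑ a, ∑ b, p a b = 1) (S : Finset (α × β)) {P G₁ G₂ : ℝ}
    (hP : ∑ ab ∈ S, p ab.1 ab.2 = P) (hG₁ : 0 < G₁) (hG₂ : 0 < G₂)
    (hS : ∑ ab ∈ S, marginalProd p ab ≤ G₁) (hSc : ∑ ab ∈ Sᶜ, marginalProd p ab ≤ G₂) :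
    P * log (P / G₁) + (1 - P) * log ((1 - P) / G₂)
      ≤ ∑ ab, p ab.1 ab.2 * log (p ab.1 ab.2 / marginalProd p ab) := by
  have hPc : ∑ ab ∈ Sᶜ, p ab.1 ab.2 = 1 - P := by
    rw [← hP, ← hp1, ← Fintype.sum_prod_type', ← sum_add_sum_compl S]
    ring
  rw [← sum_add_sum_compl S, ← hPc, ← hP]
  exact add_le_add
    (mul_log_div_le_sum_mul_log_div (fun _ _ => hp0 _ _) (fun ab _ => marginalProd_nonneg hp0 ab)
      (fun _ _ => eq_zero_of_marginalProd_eq_zero hp0) hG₁ hS)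
    (mul_log_div_le_sum_mul_log_div (fun _ _ => hp0 _ _) (fun ab _ => marginalProd_nonneg hp0 ab)
      (fun _ _ => eq_zero_of_marginalProd_eq_zero hp0) hG₂ hSc)

end JointDistribution

open Classical in
theorem stmt_13_general {𝒳 : Type*} [Fintype 𝒳] [Nonempty 𝒳]
    (p : 𝒳 → 𝒳 → ℝ) (hp0 : ∀ a b, 0 ≤ p a b) (hp1 : ∑ a, ∑ b, p a b = 1)
    (ρ : 𝒳 → 𝒳 → ℝ) (t : ℝ)
    (Pt : ℝ) (hPt : Pt = ∑ a, ∑ b, if t < ρ a b then p a b else 0)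
    (pmin pmax : ℝ)
    (hpmin : pmin = Finset.univ.inf' Finset.univ_nonempty
      (fun x : 𝒳 => ∑ b, if ρ x b ≤ t then (∑ a, p a b) else 0))
    (hpmax : pmax = Finset.univ.sup' Finset.univ_nonempty
      (fun x : 𝒳 => ∑ b, if ρ x b ≤ t then (∑ a, p a b) else 0))
    (hpmin1 : pmin < 1) (hpmax0 : 0 < pmax) :
    (1 - Pt) * Real.log (1 / pmax) - Pt * Real.log (1 - pmin)
        - (-(Pt * Real.log Pt) - (1 - Pt) * Real.log (1 - Pt))
      ≤ ∑ a, ∑ b, p a b * Real.log (p a b / ((∑ b', p a b') * (∑ a', p a' b))) := by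
  set far := univ.filter fun ab : 𝒳 × 𝒳 => t < ρ ab.1 ab.2
  have hfar : ∑ ab ∈ far, p ab.1 ab.2 = Pt := by
    rw [hPt, sum_filter, Fintype.sum_prod_type]
  have hnear : ∑ ab ∈ farᶜ, marginalProd p ab
      = ∑ a, (∑ b', p a b') * ∑ b, if ρ a b ≤ t then (∑ a', p a' b) else 0 := by
    rw [compl_filter, sum_filter, Fintype.sum_prod_type]
    simp only [marginalProd, not_lt, mul_sum, mul_ite, mul_zero]
  have hweights : ∀ a ∈ univ, 0 ≤ ∑ b', p a b' := fun a _ => sum_nonneg fun b _ => hp0 a b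
  have hnear_ge : pmin ≤ ∑ ab ∈ farᶜ, marginalProd p ab :=
    hnear ▸ hpmin ▸ inf'_le_sum_mul_of_sum_eq_one _ hweights hp1
  have hnear_le : ∑ ab ∈ farᶜ, marginalProd p ab ≤ pmax :=
    hnear ▸ hpmax ▸ sum_mul_le_sup'_of_sum_eq_one _ hweights hp1
  have hfar_le : ∑ ab ∈ far, marginalProd p ab ≤ 1 - pmin := by
    have := sum_add_sum_compl far (marginalProd p)
    rw [sum_marginalProd hp1] at this
    linarith
  have key := mul_log_div_add_mul_log_div_le_mutualInfo hp0 hp1 far hfar (sub_pos.2 hpmin1)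
    hpmax0 hfar_le hnear_le
  rw [mul_log_div_of_ne_zero _ (sub_pos.2 hpmin1).ne', mul_log_div_of_ne_zero _ hpmax0.ne'] at key
  rw [← Fintype.sum_prod_type']
  refine le_of_eq_of_le ?_ key
  rw [one_div, log_inv]
  ring

open Classical in
/-- Mutual information lower bound from proximity (Braun–Pokutta).
`p a b` is the joint pmf of `(X, Y)` on the shared finite support `𝒳`; the left-hand side of
the conclusion is the mutual information `I(X; Y)`; `Pt = P[ρ(X,Y) > t]`;
`pmin = inf_x P[Y ∈ B̄(t,x)]`, `pmax = sup_x P[Y ∈ B̄(t,x)]`; the binary entropy `H₂(Pt)` is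
expanded as `-Pt·log Pt - (1-Pt)·log(1-Pt)`. -/
theorem stmt_13 {𝒳 : Type*} [Fintype 𝒳] [Nonempty 𝒳]
    (p : 𝒳 → 𝒳 → ℝ) (hp0 : ∀ a b, 0 ≤ p a b) (hp1 : ∑ a, ∑ b, p a b = 1)
    (ρ : 𝒳 → 𝒳 → ℝ) (hsym : ∀ a b, ρ a b = ρ b a) (t : ℝ)
    (Pt : ℝ) (hPt : Pt = ∑ a, ∑ b, if t < ρ a b then p a b else 0)
    (pmin pmax : ℝ)
    (hpmin : pmin = Finset.univ.inf' Finset.univ_nonempty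
      (fun x : 𝒳 => ∑ b, if ρ x b ≤ t then (∑ a, p a b) else 0))
    (hpmax : pmax = Finset.univ.sup' Finset.univ_nonempty
      (fun x : 𝒳 => ∑ b, if ρ x b ≤ t then (∑ a, p a b) else 0))
    (hpmin0 : 0 ≤ pmin) (hpmin1 : pmin < 1) (hpmax0 : 0 < pmax) (hpmax1 : pmax ≤ 1)
    (hsum : pmin + pmax < 1) :
    (1 - Pt) * Real.log (1 / pmax) - Pt * Real.log (1 - pmin)
        - (-(Pt * Real.log Pt) - (1 - Pt) * Real.log (1 - Pt))
      ≤ ∑ a, ∑ b, p a b * Real.log (p a b / ((∑ b', p a b') * (∑ a', p a' b))) :=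
  stmt_13_general p hp0 hp1 ρ t Pt hPt pmin pmax hpmin hpmax hpmin1 hpmax0
end
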